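/- Let p ∈ (0,1], q > 0, d ∈ ℕ, x ∈ ℝ^d (a row of the design matrix) and β ∈ ℝ^d. Let r_1,…,r_d be independent random variables, each taking value 0 with probability 1-p and value 1/p with probability p, and define the perturbed row x̃ by x̃_j = x_j·(1 + |x_j|^{(q-2)/2}·(r_j - 1)) for each j. Then the variance of the perturbed linear predictor satisfies Var[∑_{j=1}^d x̃_j β_j] = ∑_{j=1}^d ((1-p)/p)·|x_j|^q·β_j^2. -/

import Mathlib

/-!
Writing `t_j = |x_j| ^ ((q - 2) / 2)`, the perturbed predictor is
`∑ j, ((x_j - x_j t_j) β_j + x_j t_j β_j · r_j)`, an affine function of the independent masks.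
Its variance is therefore `∑ j, (x_j t_j β_j)² Var[r_j]`, where `(x_j t_j)² = |x_j| ^ q` and a mask,
being Bernoulli on `{1/p, 0}`, has variance `p (1 - p) / p² = (1 - p) / p`.
-/

open MeasureTheory ProbabilityTheory

namespace ProbabilityTheory

variable {Ω : Type*} [MeasurableSpace Ω] {μ : Measure Ω}

lemma bernoulliMeasure_eq_ofReal_smul_dirac_add {X : Type*} [MeasurableSpace X] (u v : X)
    {p : ℝ} (hp0 : 0 ≤ p) (hp1 : p ≤ 1) :
    Ber(u, v, ⟨p, hp0, hp1⟩)
      = ENNReal.ofReal (1 - p) • Measure.dirac v + ENNReal.ofReal p • Measure.dirac u := by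
  rw [bernoulliMeasure_def, add_comm]
  congr 2
  all_goals ext; simp [hp0, hp1]

lemma variance_id_bernoulliMeasure (x y : ℝ) (p : unitInterval) :
    Var[id; Ber(x, y, p)] = p * (1 - p) * (x - y) ^ 2 := by
  rw [variance_eq_integral aemeasurable_id, integral_bernoulliMeasure, integral_bernoulliMeasure]
  simp only [id, smul_eq_mul]
  ring

lemma memLp_two_id_bernoulliMeasure (x y : ℝ) (p : unitInterval) :
    MemLp id 2 Ber(x, y, p) :=
  (memLp_two_iff_integrable_sq aemeasurable_id.aestronglyMeasurable).2
    (integrable_bernoulliMeasure x y p _)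

lemma variance_eq_of_map_eq_bernoulliMeasure {X : Ω → ℝ} {x y : ℝ} {p : unitInterval}
    (hX : AEMeasurable X μ) (hlaw : μ.map X = Ber(x, y, p)) :
    Var[X; μ] = p * (1 - p) * (x - y) ^ 2 := by
  rw [← variance_id_map hX, hlaw, variance_id_bernoulliMeasure]

lemma memLp_two_of_map_eq_bernoulliMeasure {X : Ω → ℝ} {x y : ℝ} {p : unitInterval}
    (hX : AEMeasurable X μ) (hlaw : μ.map X = Ber(x, y, p)) : MemLp X 2 μ := by
  have h := memLp_two_id_bernoulliMeasure x y p
  rw [← hlaw] at h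
  exact (memLp_map_measure_iff h.aestronglyMeasurable hX).1 h

lemma iIndepFun.variance_sum_const_add_mul [IsProbabilityMeasure μ] {ι : Type*} [Fintype ι]
    {X : ι → Ω → ℝ} (hX : ∀ i, MemLp (X i) 2 μ) (hindep : iIndepFun X μ) (c a : ι → ℝ) :
    Var[fun ω ↦ ∑ i, (c i + a i * X i ω); μ] = ∑ i, a i ^ 2 * Var[X i; μ] := by
  have hsum : (fun ω ↦ ∑ i, (c i + a i * X i ω)) = ∑ i, fun ω ↦ c i + a i * X i ω := by
    funext ω
    simp only [Finset.sum_apply]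
  have haffine (i : ι) : Measurable fun t : ℝ ↦ c i + a i * t :=
    (measurable_const_add (c i)).comp (measurable_const_mul (a i))
  rw [hsum, IndepFun.variance_sum (X := fun i ω ↦ c i + a i * X i ω)
    (fun i _ ↦ (memLp_const (c i)).add ((hX i).const_mul (a i)))]
  · refine Finset.sum_congr rfl fun i _ ↦ ?_
    rw [variance_const_add ((hX i).const_mul (a i)).aestronglyMeasurable, variance_const_mul]
  · intro i _ j _ hij
    exact (hindep.indepFun hij).comp (haffine i) (haffine j)

end ProbabilityTheory

lemma sq_mul_abs_rpow_sub_two_div_two {q : ℝ} (hq : q ≠ 0) (x : ℝ) :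
    (x * |x| ^ ((q - 2) / 2)) ^ 2 = |x| ^ q := by
  rcases eq_or_ne x 0 with rfl | hx
  · simp [Real.zero_rpow hq]
  rw [mul_pow, ← sq_abs, ← Real.rpow_natCast, ← Real.rpow_natCast, ← Real.rpow_mul (abs_nonneg x),
    ← Real.rpow_add (abs_pos.2 hx)]
  norm_num

/-- **Variance of the Sparseout-perturbed linear predictor of a GLM.**
Let `p ∈ (0,1]`, `q > 0`, `x β : ℝ^d`, and let `r j` be independent random
masks each taking value `0` with probability `1-p` and `1/p` with
probability `p`.  With the Sparseout perturbation
`x̃ j = x j · (1 + |x j|^((q-2)/2) · (r j - 1))`, the variance of the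
perturbed linear predictor `∑ j, x̃ j · β j` equals
`∑ j, ((1-p)/p) · |x j|^q · (β j)^2`. -/
theorem sparseout_glm_variance
    {Ω : Type*} [MeasurableSpace Ω] (μ : Measure Ω) [IsProbabilityMeasure μ]
    (p q : ℝ) (hp0 : 0 < p) (hp1 : p ≤ 1) (hq : 0 < q)
    (d : ℕ) (x β : Fin d → ℝ) (r : Fin d → Ω → ℝ)
    (hmeas : ∀ j, Measurable (r j))
    (hindep : iIndepFun r μ)
    (hdist : ∀ j, μ.map (r j)
      = ENNReal.ofReal (1 - p) • Measure.dirac (0 : ℝ)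
        + ENNReal.ofReal p • Measure.dirac (1 / p)) :
    variance (fun ω => ∑ j, x j * (1 + |x j| ^ ((q - 2) / 2) * (r j ω - 1)) * β j) μ
      = ∑ j, ((1 - p) / p) * |x j| ^ q * (β j) ^ 2 := by
  set t : Fin d → ℝ := fun j ↦ |x j| ^ ((q - 2) / 2)
  have hlaw (j : Fin d) : μ.map (r j) = Ber(1 / p, 0, ⟨p, hp0.le, hp1⟩) := by
    rw [hdist j, bernoulliMeasure_eq_ofReal_smul_dirac_add _ _ hp0.le hp1]
  have hpredictor : (fun ω ↦ ∑ j, x j * (1 + t j * (r j ω - 1)) * β j)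
      = fun ω ↦ ∑ j, ((x j - x j * t j) * β j + x j * t j * β j * r j ω) := by
    funext ω
    exact Finset.sum_congr rfl fun j _ ↦ by ring
  rw [hpredictor, iIndepFun.variance_sum_const_add_mul
    (fun j ↦ memLp_two_of_map_eq_bernoulliMeasure (hmeas j).aemeasurable (hlaw j)) hindep
    (fun j ↦ (x j - x j * t j) * β j) (fun j ↦ x j * t j * β j)]
  refine Finset.sum_congr rfl fun j _ ↦ ?_
  rw [variance_eq_of_map_eq_bernoulliMeasure (hmeas j).aemeasurable (hlaw j), mul_pow,
    sq_mul_abs_rpow_sub_two_div_two hq.ne']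
  field_simp
  ring
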